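/- Set Λ := 4 + 5/κ. There exists C > 0 such that for all z ∈ D and all ρ ∈ (0, R₀/Λ), ∫_{(B_D(z,Λρ) ∩ D_ρ) ∖ B(z,ρ)} J(z,w) dw ≥ C ρ^{−α} Φ((ρ ∧ A₀)/(δ_D(z) ∧ A₀)). -/

import Mathlib

open MeasureTheory Metric Set ENNReal Filter

noncomputable def deltaD {d : ℕ} (D : Set (EuclideanSpace ℝ (Fin d)))
    (x : EuclideanSpace ℝ (Fin d)) : ℝ :=
  Metric.infDist x (frontier D)

def Aikawa {d : ℕ} (D : Set (EuclideanSpace ℝ (Fin d))) (q : ℝ) : Prop :=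
  ∃ C₀ : ℝ, 1 ≤ C₀ ∧ ∀ x ∈ frontier D, ∀ r s : ℝ, 0 < s → s ≤ r →
    ENNReal.ofReal r < EMetric.diam (frontier D) →
    MeasureTheory.volume {y : EuclideanSpace ℝ (Fin d) |
        y ∈ Metric.ball x r ∧ Metric.infDist y (frontier D) < s} ≤
      ENNReal.ofReal (C₀ * (s / r) ^ q) * MeasureTheory.volume (Metric.ball x r)

noncomputable def truncMin (A : ℝ≥0∞) (r : ℝ) : ℝ := (min (ENNReal.ofReal r) A).toReal

/-! ### Auxiliary lemmas about `truncMin` -/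

lemma truncMin_ne_top (A : ℝ≥0∞) (r : ℝ) : min (ENNReal.ofReal r) A ≠ ⊤ :=
  ne_top_of_le_ne_top ENNReal.ofReal_ne_top (min_le_left _ _)

lemma truncMin_nonneg (A : ℝ≥0∞) (r : ℝ) : 0 ≤ truncMin A r := ENNReal.toReal_nonneg

lemma truncMin_pos {A : ℝ≥0∞} {r : ℝ} (hA : 0 < A) (hr : 0 < r) : 0 < truncMin A r :=
  ENNReal.toReal_pos (lt_min (ENNReal.ofReal_pos.2 hr) hA).ne' (truncMin_ne_top A r)

lemma truncMin_mono {A : ℝ≥0∞} {r s : ℝ} (h : r ≤ s) : truncMin A r ≤ truncMin A s :=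
  ENNReal.toReal_mono (truncMin_ne_top A s)
    (min_le_min (ENNReal.ofReal_le_ofReal h) le_rfl)

lemma min_add_min_ennreal (a b A : ℝ≥0∞) : min (a + b) A ≤ min a A + min b A := by
  rcases le_total (a + b) A with h | h
  · rw [min_eq_left h, min_eq_left (le_trans le_self_add h),
      min_eq_left (le_trans le_add_self h)]
  · rw [min_eq_right h]
    rcases le_total A a with h' | h'
    · rw [min_eq_right h']; exact le_self_add
    · rcases le_total A b with h'' | h''
      · rw [min_eq_right h'']; exact le_add_self
      · rw [min_eq_left h', min_eq_left h'']; exact h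

lemma truncMin_add_le {A : ℝ≥0∞} {x y : ℝ} (hx : 0 ≤ x) (hy : 0 ≤ y) :
    truncMin A (x + y) ≤ truncMin A x + truncMin A y := by
  have h := min_add_min_ennreal (ENNReal.ofReal x) (ENNReal.ofReal y) A
  rw [← ENNReal.ofReal_add hx hy] at h
  calc truncMin A (x + y)
      ≤ (min (ENNReal.ofReal x) A + min (ENNReal.ofReal y) A).toReal :=
        ENNReal.toReal_mono (ENNReal.add_ne_top.2 ⟨truncMin_ne_top A x, truncMin_ne_top A y⟩) h
    _ = truncMin A x + truncMin A y :=
        ENNReal.toReal_add (truncMin_ne_top A x) (truncMin_ne_top A y)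

lemma truncMin_mul_le {A : ℝ≥0∞} {c r : ℝ} (hc : 1 ≤ c) (hr : 0 ≤ r) :
    truncMin A (c * r) ≤ c * truncMin A r := by
  have hc0 : 0 ≤ c := by linarith
  have key : min (ENNReal.ofReal (c * r)) A ≤ ENNReal.ofReal c * min (ENNReal.ofReal r) A := by
    rw [ENNReal.ofReal_mul hc0]
    rcases le_total (ENNReal.ofReal r) A with h | h
    · rw [min_eq_left h]
      exact min_le_left _ _
    · rw [min_eq_right h]
      exact le_trans (min_le_right _ _) (le_mul_of_one_le_left (by simp)
        (ENNReal.one_le_ofReal.2 hc))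
  calc truncMin A (c * r)
      ≤ (ENNReal.ofReal c * min (ENNReal.ofReal r) A).toReal :=
        ENNReal.toReal_mono (ENNReal.mul_ne_top ENNReal.ofReal_ne_top (truncMin_ne_top A r)) key
    _ = c * truncMin A r := by
        rw [ENNReal.toReal_mul, ENNReal.toReal_ofReal hc0]; rfl

/-- A ball inside `D` gives a lower bound on the distance to the frontier. -/
lemma le_deltaD_of_ball_subset {d : ℕ} {D : Set (EuclideanSpace ℝ (Fin d))}
    (hDopen : IsOpen D) (hfr : (frontier D).Nonempty)
    {w : EuclideanSpace ℝ (Fin d)} {r : ℝ} (h : Metric.ball w r ⊆ D) :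
    r ≤ deltaD D w := by
  by_contra hlt
  push_neg at hlt
  obtain ⟨y, hy, hdy⟩ := (Metric.infDist_lt_iff hfr).1 hlt
  have hyD : y ∈ D := h (by rwa [Metric.mem_ball, dist_comm])
  have : y ∈ closure D \ D := hDopen.frontier_eq ▸ hy
  exact this.2 hyD

/-- Comparison of the Φ-values. -/
lemma phi_comp (Φ : ℝ → ℝ) (β₁ C_Φ : ℝ) (hβ₁ : 0 ≤ β₁) (hC_Φ : 1 ≤ C_Φ)
    (hΦ1 : ∀ r : ℝ, 0 ≤ r → 1 ≤ Φ r) (hΦmono : MonotoneOn Φ (Set.Ici 0))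
    (hΦscale : ∀ s r : ℝ, 0 < s → s ≤ r → Φ r ≤ C_Φ * (r / s) ^ β₁ * Φ s)
    (Λ p a dz dw : ℝ) (hΛ : 1 ≤ Λ) (hp : 0 < p) (hpa : p ≤ a)
    (hdz : 0 < dz) (hdw : 0 < dw) (hlip : dw ≤ dz + Λ * p) :
    Φ (p / dz) ≤ (C_Φ * (2 * Λ) ^ β₁ + Φ 1) * Φ (a ^ 2 / (dz * dw)) := by
  have hap : 0 < a := lt_of_lt_of_le hp hpa
  have hT : 0 < p / dz := div_pos hp hdz
  have hA : 0 < a ^ 2 / (dz * dw) := div_pos (pow_pos hap 2) (mul_pos hdz hdw)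
  have hΦA1 : 1 ≤ Φ (a ^ 2 / (dz * dw)) := hΦ1 _ hA.le
  have hΦ11 : 1 ≤ Φ 1 := hΦ1 1 one_pos.le
  have hΦT1 : 1 ≤ Φ (p / dz) := hΦ1 _ hT.le
  have h2Λβ : 1 ≤ (2 * Λ) ^ β₁ := Real.one_le_rpow (by linarith) hβ₁
  have hM1 : 1 ≤ C_Φ * (2 * Λ) ^ β₁ := by nlinarith
  have hprod1 : 0 ≤ Φ 1 * Φ (a ^ 2 / (dz * dw)) := mul_nonneg (by linarith) (by linarith)
  rcases le_total dw (2 * Λ * p) with hcase | hcase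
  · have key : p * dw ≤ 2 * Λ * a ^ 2 := by
      have e1 : p * dw ≤ p * (2 * Λ * p) := mul_le_mul_of_nonneg_left hcase hp.le
      have e2 : p * p ≤ a * a := mul_le_mul hpa hpa hp.le hap.le
      nlinarith [mul_nonneg (by linarith : (0:ℝ) ≤ 2 * Λ)
        (by linarith : (0:ℝ) ≤ a * a - p * p)]
    have hTA : p / dz ≤ 2 * Λ * (a ^ 2 / (dz * dw)) := by
      calc p / dz = p * dw / (dz * dw) := by
            field_simp
        _ ≤ 2 * Λ * a ^ 2 / (dz * dw) := by
            have h := mul_le_mul_of_nonneg_right key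
              (inv_nonneg.2 (mul_pos hdz hdw).le)
            simpa [div_eq_mul_inv] using h
        _ = 2 * Λ * (a ^ 2 / (dz * dw)) := by ring
    rcases le_total (p / dz) (a ^ 2 / (dz * dw)) with hle | hle
    · have hmono := hΦmono (Set.mem_Ici.2 hT.le) (Set.mem_Ici.2 hA.le) hle
      nlinarith [hprod1, mul_nonneg (by linarith : (0:ℝ) ≤ C_Φ * (2 * Λ) ^ β₁ - 1)
        (by linarith : (0:ℝ) ≤ Φ (a ^ 2 / (dz * dw)))]
    · have hsc := hΦscale _ _ hA hle
      have hratio : p / dz / (a ^ 2 / (dz * dw)) ≤ 2 * Λ := by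
        rw [div_le_iff₀ hA]; linarith
      have hpow : (p / dz / (a ^ 2 / (dz * dw))) ^ β₁ ≤ (2 * Λ) ^ β₁ :=
        Real.rpow_le_rpow (div_nonneg hT.le hA.le) hratio hβ₁
      have hstep : C_Φ * (p / dz / (a ^ 2 / (dz * dw))) ^ β₁ * Φ (a ^ 2 / (dz * dw)) ≤
          C_Φ * (2 * Λ) ^ β₁ * Φ (a ^ 2 / (dz * dw)) := by
        apply mul_le_mul_of_nonneg_right _ (by linarith)
        exact mul_le_mul_of_nonneg_left hpow (by linarith)
      nlinarith [hprod1, hsc, hstep]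
  · have hdzp : p ≤ dz := by
      nlinarith [mul_nonneg (by linarith : (0:ℝ) ≤ Λ - 1) hp.le]
    have hT1 : p / dz ≤ 1 := (div_le_one hdz).2 hdzp
    have hmono := hΦmono (Set.mem_Ici.2 hT.le) (Set.mem_Ici.2 one_pos.le) hT1
    have h1A : Φ 1 * 1 ≤ Φ 1 * Φ (a ^ 2 / (dz * dw)) :=
      mul_le_mul_of_nonneg_left hΦA1 (by linarith)
    nlinarith [mul_nonneg (by linarith : (0:ℝ) ≤ C_Φ * (2 * Λ) ^ β₁)
      (by linarith : (0:ℝ) ≤ Φ (a ^ 2 / (dz * dw)))]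

theorem stmt7 {d : ℕ} (hd : 1 ≤ d) (D : Set (EuclideanSpace ℝ (Fin d)))
    (hDopen : IsOpen D) (hDne : D.Nonempty) (hfr : (frontier D).Nonempty)
    (κ : ℝ) (hκ0 : 0 < κ) (hκ1 : κ < 1) (R₀ : ℝ≥0∞) (hR₀0 : 0 < R₀)
    (hR₀diam : R₀ ≤ EMetric.diam D)
    (hfat : ∀ x ∈ closure D, ∀ r : ℝ, 0 < r → ENNReal.ofReal r < R₀ →
      ∃ z ∈ D, Metric.ball z (κ * r) ⊆ D ∩ Metric.ball x r)
    (Φ : ℝ → ℝ) (β₁ C_Φ : ℝ) (hβ₁ : 0 ≤ β₁) (hC_Φ : 1 ≤ C_Φ)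
    (hΦ0 : Φ 0 = 1) (hΦ1 : ∀ r : ℝ, 0 ≤ r → 1 ≤ Φ r)
    (hΦmono : MonotoneOn Φ (Set.Ici 0)) (hΦcont : ContinuousOn Φ (Set.Ici 0))
    (hΦscale : ∀ s r : ℝ, 0 < s → s ≤ r → Φ r ≤ C_Φ * (r / s) ^ β₁ * Φ s)
    (α : ℝ) (hα0 : 0 < α) (hα2 : α < 2) (A₀ : ℝ≥0∞) (hA₀ : 0 < A₀)
    (J : EuclideanSpace ℝ (Fin d) → EuclideanSpace ℝ (Fin d) → ℝ)
    (C₁ : ℝ) (hC₁ : 1 < C₁)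
    (hJnn : ∀ x y, 0 ≤ J x y)
    (hJmeas : Measurable (Function.uncurry J))
    (hJsym : ∀ x ∈ D, ∀ y ∈ D, J x y = J y x)
    (hJbound : ∀ x ∈ D, ∀ y ∈ D, x ≠ y →
      C₁⁻¹ * (dist x y ^ (-((d : ℝ) + α)) *
          Φ ((truncMin A₀ (dist x y)) ^ 2 /
            (truncMin A₀ (deltaD D x) * truncMin A₀ (deltaD D y)))) ≤ J x y ∧
      J x y ≤ C₁ * (dist x y ^ (-((d : ℝ) + α)) *
          Φ ((truncMin A₀ (dist x y)) ^ 2 /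
            (truncMin A₀ (deltaD D x) * truncMin A₀ (deltaD D y)))))
    :
    ∃ C : ℝ, 0 < C ∧ ∀ z ∈ D, ∀ ρ : ℝ, 0 < ρ →
      ENNReal.ofReal ((4 + 5 / κ) * ρ) < R₀ →
      ENNReal.ofReal (C * ρ ^ (-α) *
          Φ (truncMin A₀ ρ / truncMin A₀ (deltaD D z))) ≤
        ∫⁻ w in ((Metric.ball z ((4 + 5 / κ) * ρ) ∩ D) ∩
            {x : EuclideanSpace ℝ (Fin d) | ρ < deltaD D x}) \ Metric.ball z ρ,
          ENNReal.ofReal (J z w) := by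
  haveI : Nontrivial (EuclideanSpace ℝ (Fin d)) :=
    Module.nontrivial_of_finrank_pos (R := ℝ) (by rw [finrank_euclideanSpace_fin]; omega)
  set Λ : ℝ := 4 + 5 / κ with hΛdef
  have hΛ9 : 9 < Λ := by
    have h5 : 5 < 5 / κ := by rw [lt_div_iff₀ hκ0]; nlinarith
    rw [hΛdef]; linarith
  have hΛ0 : (0 : ℝ) < Λ := by linarith
  have hκΛ : κ * Λ = 4 * κ + 5 := by
    rw [hΛdef]; field_simp
  set V : ℝ := (volume (Metric.ball (0 : EuclideanSpace ℝ (Fin d)) 1)).toReal with hVdef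
  have hV : 0 < V :=
    ENNReal.toReal_pos (measure_ball_pos volume _ one_pos).ne' measure_ball_lt_top.ne
  set M : ℝ := C_Φ * (2 * Λ) ^ β₁ + Φ 1 with hMdef
  have h2Λβ : 1 ≤ (2 * Λ) ^ β₁ := Real.one_le_rpow (by linarith) hβ₁
  have hΦ11 : 1 ≤ Φ 1 := hΦ1 1 one_pos.le
  have hM : 0 < M := by rw [hMdef]; nlinarith
  have hC₁inv : 0 < C₁⁻¹ := inv_pos.2 (by linarith)
  have hΛpow : 0 < Λ ^ (-((d : ℝ) + α)) := Real.rpow_pos_of_pos hΛ0 _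
  refine ⟨C₁⁻¹ * Λ ^ (-((d : ℝ) + α)) * V / M, div_pos (mul_pos (mul_pos hC₁inv hΛpow) hV) hM, ?_⟩
  intro z hz ρ hρ hρR
  have hΛρ : 0 < Λ * ρ := mul_pos hΛ0 hρ
  obtain ⟨z', hz'D, hball⟩ := hfat z (subset_closure hz) (Λ * ρ) hΛρ hρR
  -- a point c at distance exactly 2ρ from z' and at distance ≥ 2ρ from z
  obtain ⟨c, hcz', hcz⟩ : ∃ c : EuclideanSpace ℝ (Fin d),
      dist c z' = 2 * ρ ∧ 2 * ρ ≤ dist c z := by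
    by_cases hzz : z' = z
    · subst hzz
      refine ⟨z' + (2 * ρ) • EuclideanSpace.single (⟨0, by omega⟩ : Fin d) (1 : ℝ), ?_, ?_⟩
      · rw [dist_eq_norm, add_sub_cancel_left, norm_smul, EuclideanSpace.norm_single,
          Real.norm_eq_abs, abs_of_pos (by linarith : (0:ℝ) < 2 * ρ), norm_one, mul_one]
      · rw [dist_eq_norm, add_sub_cancel_left, norm_smul, EuclideanSpace.norm_single,
          Real.norm_eq_abs, abs_of_pos (by linarith : (0:ℝ) < 2 * ρ), norm_one, mul_one]
    · set v := z' - z with hvdef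
      have hv : 0 < ‖v‖ := by
        rw [norm_pos_iff, hvdef, sub_ne_zero]; exact hzz
      refine ⟨z' + (2 * ρ) • (‖v‖⁻¹ • v), ?_, ?_⟩
      · rw [dist_eq_norm, add_sub_cancel_left, norm_smul, norm_smul, norm_inv, norm_norm,
          Real.norm_eq_abs, abs_of_pos (by linarith : (0:ℝ) < 2 * ρ)]
        field_simp
      · have hcalc : z' + (2 * ρ) • (‖v‖⁻¹ • v) - z = (1 + 2 * ρ * ‖v‖⁻¹) • v := by
          rw [smul_smul, add_smul, one_smul, hvdef]
          abel
        have haux : 0 < 2 * ρ * ‖v‖⁻¹ := mul_pos (by linarith) (inv_pos.2 hv)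
        rw [dist_eq_norm, hcalc, norm_smul, Real.norm_eq_abs,
          abs_of_pos (by linarith : (0:ℝ) < 1 + 2 * ρ * ‖v‖⁻¹)]
        have heq : (1 + 2 * ρ * ‖v‖⁻¹) * ‖v‖ = ‖v‖ + 2 * ρ := by
          field_simp
        rw [heq]; linarith
  -- small balls around points of `ball c ρ` stay inside the fat ball
  have h5κΛ : 5 * ρ < κ * (Λ * ρ) := by
    rw [← mul_assoc, hκΛ]; nlinarith
  have hsub5 : ∀ w ∈ Metric.ball c ρ, Metric.ball w (2 * ρ) ⊆ Metric.ball z' (κ * (Λ * ρ)) := by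
    intro w hw y hy
    rw [Metric.mem_ball] at hw hy ⊢
    have h1 := dist_triangle y w z'
    have h2 := dist_triangle w c z'
    rw [hcz'] at h2
    linarith
  have hδz : 0 < deltaD D z := by
    obtain ⟨ε, hε, hεb⟩ := Metric.isOpen_iff.1 hDopen z hz
    exact lt_of_lt_of_le hε (le_deltaD_of_ball_subset hDopen hfr hεb)
  have htz : 0 < truncMin A₀ (deltaD D z) := truncMin_pos hA₀ hδz
  have htρ : 0 < truncMin A₀ ρ := truncMin_pos hA₀ hρ
  have hΦT1 : 1 ≤ Φ (truncMin A₀ ρ / truncMin A₀ (deltaD D z)) :=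
    hΦ1 _ (div_nonneg htρ.le htz.le)
  -- the pointwise lower bound constant
  set K' : ℝ := C₁⁻¹ * ((Λ * ρ) ^ (-((d : ℝ) + α)) *
      (Φ (truncMin A₀ ρ / truncMin A₀ (deltaD D z)) / M)) with hK'def
  have hK'nn : 0 ≤ K' := by
    rw [hK'def]
    exact mul_nonneg hC₁inv.le (mul_nonneg (Real.rpow_nonneg hΛρ.le _)
      (div_nonneg (by linarith) hM.le))
  -- the ball is contained in the region of integration
  have hsubE : Metric.ball c ρ ⊆ ((Metric.ball z (Λ * ρ) ∩ D) ∩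
      {x : EuclideanSpace ℝ (Fin d) | ρ < deltaD D x}) \ Metric.ball z ρ := by
    intro w hw
    have hwz'mem : w ∈ Metric.ball z' (κ * (Λ * ρ)) :=
      hsub5 w hw (Metric.mem_ball_self (by linarith))
    have hwD : w ∈ D := (hball hwz'mem).1
    have hwB : w ∈ Metric.ball z (Λ * ρ) := (hball hwz'mem).2
    have hδw : 2 * ρ ≤ deltaD D w :=
      le_deltaD_of_ball_subset hDopen hfr
        ((hsub5 w hw).trans (hball.trans Set.inter_subset_left))
    have hwz : ρ < dist w z := by
      have h1 := dist_triangle c w z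
      rw [Metric.mem_ball] at hw
      rw [dist_comm w c] at hw
      linarith
    refine ⟨⟨⟨hwB, hwD⟩, ?_⟩, ?_⟩
    · exact lt_of_lt_of_le (by linarith) hδw
    · rw [Metric.mem_ball]; intro h; linarith
  -- the pointwise bound
  have hpoint : ∀ w ∈ Metric.ball c ρ, ENNReal.ofReal K' ≤ ENNReal.ofReal (J z w) := by
    intro w hw
    have hwz'mem : w ∈ Metric.ball z' (κ * (Λ * ρ)) :=
      hsub5 w hw (Metric.mem_ball_self (by linarith))
    have hwD : w ∈ D := (hball hwz'mem).1
    have hwB : w ∈ Metric.ball z (Λ * ρ) := (hball hwz'mem).2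
    have hδw : 2 * ρ ≤ deltaD D w :=
      le_deltaD_of_ball_subset hDopen hfr
        ((hsub5 w hw).trans (hball.trans Set.inter_subset_left))
    have hwz : ρ < dist w z := by
      have h1 := dist_triangle c w z
      rw [Metric.mem_ball] at hw
      rw [dist_comm w c] at hw
      linarith
    have hdzw : ρ < dist z w := by rwa [dist_comm]
    have hdzw2 : dist z w < Λ * ρ := by
      rw [dist_comm]; exact Metric.mem_ball.1 hwB
    have hne : z ≠ w := by
      rintro rfl
      rw [dist_self] at hdzw; linarith
    have hδwpos : 0 < deltaD D w := by linarith
    have htw : 0 < truncMin A₀ (deltaD D w) := truncMin_pos hA₀ hδwpos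
    have hta : truncMin A₀ ρ ≤ truncMin A₀ (dist z w) := truncMin_mono hdzw.le
    have hlipw : deltaD D w ≤ deltaD D z + Λ * ρ := by
      have h := Metric.infDist_le_infDist_add_dist (x := w) (y := z) (s := frontier D)
      have : dist w z ≤ Λ * ρ := by
        rw [dist_comm] at hdzw2; exact hdzw2.le
      calc deltaD D w ≤ deltaD D z + dist w z := h
        _ ≤ deltaD D z + Λ * ρ := by linarith
    have htw_le : truncMin A₀ (deltaD D w) ≤ truncMin A₀ (deltaD D z) + Λ * truncMin A₀ ρ := by
      calc truncMin A₀ (deltaD D w) ≤ truncMin A₀ (deltaD D z + Λ * ρ) := truncMin_mono hlipw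
        _ ≤ truncMin A₀ (deltaD D z) + truncMin A₀ (Λ * ρ) :=
            truncMin_add_le Metric.infDist_nonneg hΛρ.le
        _ ≤ truncMin A₀ (deltaD D z) + Λ * truncMin A₀ ρ := by
            have := truncMin_mul_le (A := A₀) (c := Λ) (r := ρ) (by linarith) hρ.le
            linarith
    have hphi := phi_comp Φ β₁ C_Φ hβ₁ hC_Φ hΦ1 hΦmono hΦscale Λ
      (truncMin A₀ ρ) (truncMin A₀ (dist z w)) (truncMin A₀ (deltaD D z))
      (truncMin A₀ (deltaD D w)) (by linarith) htρ hta htz htw htw_le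
    have hJl := (hJbound z hz w hwD hne).1
    have hΦApos : (0:ℝ) < Φ ((truncMin A₀ (dist z w)) ^ 2 /
        (truncMin A₀ (deltaD D z) * truncMin A₀ (deltaD D w))) := by
      have := hΦ1 ((truncMin A₀ (dist z w)) ^ 2 /
        (truncMin A₀ (deltaD D z) * truncMin A₀ (deltaD D w))) (div_nonneg (sq_nonneg _) (mul_pos htz htw).le)
      linarith
    have h1 : (Λ * ρ) ^ (-((d : ℝ) + α)) ≤ dist z w ^ (-((d : ℝ) + α)) := by
      apply Real.rpow_le_rpow_of_nonpos (by linarith) hdzw2.le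
      have hdnn : (0 : ℝ) ≤ (d : ℝ) := Nat.cast_nonneg d
      linarith
    have h2 : Φ (truncMin A₀ ρ / truncMin A₀ (deltaD D z)) / M ≤
        Φ ((truncMin A₀ (dist z w)) ^ 2 /
          (truncMin A₀ (deltaD D z) * truncMin A₀ (deltaD D w))) := by
      rw [div_le_iff₀ hM]
      calc Φ (truncMin A₀ ρ / truncMin A₀ (deltaD D z)) ≤ M * _ := hphi
        _ = _ := mul_comm _ _
    have h3 : K' ≤ C₁⁻¹ * (dist z w ^ (-((d : ℝ) + α)) *
        Φ ((truncMin A₀ (dist z w)) ^ 2 /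
          (truncMin A₀ (deltaD D z) * truncMin A₀ (deltaD D w)))) := by
      rw [hK'def]
      apply mul_le_mul_of_nonneg_left _ hC₁inv.le
      exact mul_le_mul h1 h2 (div_nonneg (by linarith) hM.le)
        (Real.rpow_nonneg dist_nonneg _)
    exact ENNReal.ofReal_le_ofReal (h3.trans hJl)
  -- assemble the integral estimate
  have hvol : volume (Metric.ball c ρ) =
      ENNReal.ofReal (ρ ^ d) * volume (Metric.ball (0 : EuclideanSpace ℝ (Fin d)) 1) := by
    rw [Measure.addHaar_ball volume c hρ.le, finrank_euclideanSpace_fin]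
  have hvol01 : volume (Metric.ball (0 : EuclideanSpace ℝ (Fin d)) 1) = ENNReal.ofReal V :=
    (ENNReal.ofReal_toReal measure_ball_lt_top.ne).symm
  have hexp : ρ ^ (-((d : ℝ) + α)) * ρ ^ d = ρ ^ (-α) := by
    rw [← Real.rpow_natCast ρ d, ← Real.rpow_add hρ]
    rw [show -((d : ℝ) + α) + (d : ℕ) = -α by push_cast; ring]
  have hkey : C₁⁻¹ * Λ ^ (-((d : ℝ) + α)) * V / M * ρ ^ (-α) *
      Φ (truncMin A₀ ρ / truncMin A₀ (deltaD D z)) = K' * (ρ ^ d * V) := by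
    rw [hK'def, Real.mul_rpow hΛ0.le hρ.le, ← hexp]
    ring
  calc ENNReal.ofReal (C₁⁻¹ * Λ ^ (-((d : ℝ) + α)) * V / M * ρ ^ (-α) *
        Φ (truncMin A₀ ρ / truncMin A₀ (deltaD D z)))
      = ENNReal.ofReal K' * volume (Metric.ball c ρ) := by
        rw [hkey, hvol, hvol01, ENNReal.ofReal_mul hK'nn,
          ENNReal.ofReal_mul (pow_nonneg hρ.le d)]
    _ = ∫⁻ _ in Metric.ball c ρ, ENNReal.ofReal K' := (setLIntegral_const _ _).symm
    _ ≤ ∫⁻ w in Metric.ball c ρ, ENNReal.ofReal (J z w) :=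
        setLIntegral_mono' measurableSet_ball hpoint
    _ ≤ _ := lintegral_mono_set hsubE
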